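/- arXiv:0809.3720 — 4 statements merged into one kernel-verified Lean document; each statement's English description precedes it below -/
import Mathlib

section
/- For parameters a,b,c,d,e,f define the quadratic form Q_{abcdef}(x,y,z,t) = a(x²+y²) + b(z²+t²) + cxz + dyt + ext + fyz, and let τ(x,y,z,t) = ((x²+y²)z, (x²+y²)t, (z²+t²)x, (z²+t²)y). Then Q_{abcdef}(τ(x,y,z,t)) = (x²+y²)(z²+t²) · Q_{abcdfe}(x,y,z,t) for all (x,y,z,t), where Q_{abcdfe} is obtained from Q_{abcdef} by swapping the parameters e and f. -/
/-- The quadric `Q_{abcdef}` through the base points of the Cremona involution `τ`. -/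
def Qabcdef {R : Type*} [CommRing R] (a b c d e f x y z t : R) : R :=
  a * (x^2 + y^2) + b * (z^2 + t^2) + c * x * z + d * y * t + e * x * t + f * y * z

theorem Qabcdef_comp_tau {R : Type*} [CommRing R] (a b c d e f x y z t : R) :
    Qabcdef a b c d e f
      ((x^2 + y^2) * z) ((x^2 + y^2) * t) ((z^2 + t^2) * x) ((z^2 + t^2) * y) =
    (x^2 + y^2) * (z^2 + t^2) * Qabcdef a b c d f e x y z t := by
  unfold Qabcdef; ring
end

section
/- For parameters a,b,c,d,e,f define Q'_{abcdef}(x,y,z,t) = a(x²+y²) + bz² + czt + dt² + e(xt+yz) + f(xz−yt), and let σ'(x,y,z,t) = (y(z²−t²)+2xzt, x(t²−z²)+2yzt, t(z²+t²), z(z²+t²)). Then Q'_{abcdef}(σ'(x,y,z,t)) = (z²+t²)² · Q'_{adcbef}(x,y,z,t) for all (x,y,z,t), where Q'_{adcbef} is obtained from Q'_{abcdef} by swapping the parameters b and d. -/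
/-- The quadric `Q'_{abcdef}` adapted to the degenerate Cremona involution `σ'`. -/
def Q'abcdef {R : Type*} [CommRing R] (a b c d e f x y z t : R) : R :=
  a * (x^2 + y^2) + b * z^2 + c * z * t + d * t^2 + e * (x * t + y * z)
    + f * (x * z - y * t)

theorem Q'abcdef_comp_sigma {R : Type*} [CommRing R] (a b c d e f x y z t : R) :
    Q'abcdef a b c d e f
      (y * (z^2 - t^2) + 2 * x * z * t) (x * (t^2 - z^2) + 2 * y * z * t)
      (t * (z^2 + t^2)) (z * (z^2 + t^2)) =
    (z^2 + t^2)^2 * Q'abcdef a d c b e f x y z t := by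
  unfold Q'abcdef; ring
end

section
/- Let d ≥ 1 be an integer and m₁,…,m_k nonnegative real numbers satisfying Σᵢ mᵢ² = 2d² − 2 and Σᵢ mᵢ = 4d − 4. If mᵢ ≤ d/2 for every i, then d = 1 (and all mᵢ = 0). -/
theorem noether_fano_first_step (d : ℕ) (hd : 1 ≤ d) (k : ℕ) (m : Fin k → ℝ)
    (hnn : ∀ i, 0 ≤ m i)
    (hsq : ∑ i, (m i)^2 = 2 * (d : ℝ)^2 - 2)
    (hsum : ∑ i, m i = 4 * (d : ℝ) - 4)
    (hsmall : ∀ i, m i ≤ (d : ℝ) / 2) :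
    d = 1 ∧ ∀ i, m i = 0 := by
  have key : ∑ i, (m i)^2 ≤ ∑ i, ((d : ℝ) / 2) * m i := by
    apply Finset.sum_le_sum
    intro i _
    have := mul_le_mul_of_nonneg_right (hsmall i) (hnn i)
    nlinarith [hnn i, hsmall i]
  rw [← Finset.mul_sum, hsum, hsq] at key
  have hd1 : (d : ℝ) ≤ 1 := by nlinarith
  have hde : d = 1 := by
    have : (1 : ℝ) ≤ (d : ℝ) := by exact_mod_cast hd
    have : (d : ℝ) = 1 := le_antisymm hd1 this
    exact_mod_cast this
  subst hde
  refine ⟨rfl, ?_⟩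
  have hs0 : ∑ i, m i = 0 := by rw [hsum]; norm_num
  intro i
  exact (Finset.sum_eq_zero_iff_of_nonneg (fun j _ => hnn j)).mp hs0 i (Finset.mem_univ i)
end

section
/- Let d ≥ 1 be an integer and m₁,…,m_k (k ≥ 4) nonnegative reals with Σᵢ mᵢ² = 2d² − 2 and Σᵢ mᵢ = 4d − 4. Set s = m₁ + m₂ + m₃ + m₄ and assume s > 2d. Define d' = 3d − s, m'ᵢ = 2d − s + mᵢ for i = 1,2,3,4, and m'ᵢ = mᵢ for i ≥ 5. Then d' < d, Σᵢ (m'ᵢ)² = 2(d')² − 2, and Σᵢ m'ᵢ = 4d' − 4. -/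
theorem cremona_lowers_degree (d : ℕ) (hd : 1 ≤ d) (k : ℕ) (hk : 4 ≤ k)
    (m : ℕ → ℝ) (hnn : ∀ i < k, 0 ≤ m i)
    (hsq : ∑ i ∈ Finset.range k, (m i)^2 = 2 * (d : ℝ)^2 - 2)
    (hsum : ∑ i ∈ Finset.range k, m i = 4 * (d : ℝ) - 4)
    (s : ℝ) (hs : s = m 0 + m 1 + m 2 + m 3) (hbig : 2 * (d : ℝ) < s)
    (d' : ℝ) (hd' : d' = 3 * (d : ℝ) - s)
    (m' : ℕ → ℝ) (hm' : ∀ i, m' i = if i < 4 then 2 * (d : ℝ) - s + m i else m i) :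
    d' < (d : ℝ) ∧
    ∑ i ∈ Finset.range k, (m' i)^2 = 2 * d'^2 - 2 ∧
    ∑ i ∈ Finset.range k, m' i = 4 * d' - 4 := by
  have hsplit : ∀ f : ℕ → ℝ, ∑ i ∈ Finset.range k, f i
      = ∑ i ∈ Finset.range 4, f i + ∑ i ∈ Finset.Ico 4 k, f i := by
    intro f
    rw [Finset.range_eq_Ico, ← Finset.sum_Ico_consecutive f (Nat.zero_le 4) hk, Finset.range_eq_Ico]
  have htail : ∀ g : ℕ → ℝ, (∀ i, 4 ≤ i → g i = m i) →
      ∑ i ∈ Finset.Ico 4 k, g i = ∑ i ∈ Finset.Ico 4 k, m i := by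
    intro g hg
    exact Finset.sum_congr rfl fun i hi => hg i (Finset.mem_Ico.mp hi).1
  have h1 : ∑ i ∈ Finset.Ico 4 k, m' i = ∑ i ∈ Finset.Ico 4 k, m i :=
    htail _ fun i hi => by rw [hm' i, if_neg (by omega)]
  have h2 : ∑ i ∈ Finset.Ico 4 k, (m' i)^2 = ∑ i ∈ Finset.Ico 4 k, (m i)^2 :=
    Finset.sum_congr rfl fun i hi => by
      rw [hm' i, if_neg (by have := (Finset.mem_Ico.mp hi).1; omega)]
  rw [hsplit m'] at *
  rw [hsplit (fun i => (m' i)^2), hsplit m, hsplit (fun i => (m i)^2)] at *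
  simp only [Finset.sum_range_succ, Finset.sum_range_zero] at *
  rw [hm' 0, hm' 1, hm' 2, hm' 3] at *
  norm_num at *
  refine ⟨by linarith, ?_, ?_⟩
  · rw [h2]; nlinarith [hsq, hs]
  · rw [h1]; linarith
end
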